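/- For α ∈ [0,π], in the weak coin flipping protocol with states |ψ_a⟩ as defined, any cheating strategy of Alice wins with probability at most (1/2)(1 + cos²(α/2)). Concretely: for any density matrix σ on ℂ³, (1/2)(F(σ,ρ₀) + F(σ,ρ₁)) ≤ (1/2)(1 + cos²(α/2)), where ρ_a = cos²(α/2)|0⟩⟨0| + sin²(α/2)|a+1⟩⟨a+1|. -/

import Mathlib

/-!
Both honest states are diagonal with a vanishing entry, so `M = √σ ρ √σ` is a singular
positive `3 × 3` matrix and `(tr √M)² = tr M + 2 √e₂(M)`, where
`e₂(M) = ((tr M)² - tr M²) / 2` is the second elementary symmetric function of its spectrum.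
For `ρ = diag d`, `tr M = ∑ dᵢ σᵢᵢ` and `tr M² = ∑ dᵢ dₖ |σᵢₖ|² ≥ ∑ (dᵢ σᵢᵢ)²`, which bounds
`F(σ, ρ)` by the classical fidelity `(∑ √(dᵢ σᵢᵢ))²` of the diagonals. With `p, q, r` the
square roots of the diagonal of `σ`, what remains is
`(c p + s q)² + (c p + s r)² ≤ 1 + c²` on the unit sphere, a sum of squares.
-/

open Matrix
open scoped ComplexOrder

open Classical in
/-- Square root of a positive semidefinite matrix (junk value `0` otherwise). -/
noncomputable def msqrt {n : Type*} [Fintype n] [DecidableEq n] (A : Matrix n n ℂ) :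
    Matrix n n ℂ :=
  if h : A.PosSemidef then
    (h.1.eigenvectorUnitary : Matrix n n ℂ) *
      diagonal ((↑) ∘ Real.sqrt ∘ h.1.eigenvalues) *
      (star h.1.eigenvectorUnitary : Matrix n n ℂ)
  else 0

/-- Fidelity `F(ρ,σ) = (tr √(√ρ σ √ρ))²`. -/
noncomputable def fid {n : Type*} [Fintype n] [DecidableEq n] (ρ σ : Matrix n n ℂ) : ℝ :=
  ((msqrt (msqrt ρ * σ * msqrt ρ)).trace).re ^ 2

section MatrixSqrt

variable {n : Type*} [Fintype n] [DecidableEq n] {A : Matrix n n ℂ}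

lemma trace_conjStarAlgAut (U : unitary (Matrix n n ℂ)) (B : Matrix n n ℂ) :
    (Unitary.conjStarAlgAut ℂ _ U B).trace = B.trace := by
  rw [Unitary.conjStarAlgAut_apply, trace_mul_cycle, Unitary.coe_star_mul_self, one_mul]

lemma msqrt_eq_conjStarAlgAut (hA : A.PosSemidef) :
    msqrt A = Unitary.conjStarAlgAut ℂ _ hA.1.eigenvectorUnitary
      (diagonal ((↑) ∘ Real.sqrt ∘ hA.1.eigenvalues)) := by
  rw [msqrt, dif_pos hA, Unitary.conjStarAlgAut_apply]

lemma msqrt_posSemidef (hA : A.PosSemidef) : (msqrt A).PosSemidef := by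
  have hD : (diagonal (((↑) : ℝ → ℂ) ∘ Real.sqrt ∘ hA.1.eigenvalues)).PosSemidef :=
    PosSemidef.diagonal fun i => by simp
  rw [msqrt, dif_pos hA, star_eq_conjTranspose]
  exact hD.mul_mul_conjTranspose_same _

lemma msqrt_mul_self (hA : A.PosSemidef) : msqrt A * msqrt A = A := by
  conv_rhs => rw [hA.1.spectral_theorem]
  rw [msqrt_eq_conjStarAlgAut hA, ← map_mul, diagonal_mul_diagonal]
  congr 2
  funext i
  simp [← Complex.ofReal_mul, Real.mul_self_sqrt (hA.eigenvalues_nonneg i)]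

lemma re_trace_msqrt (hA : A.PosSemidef) :
    (msqrt A).trace.re = ∑ i, √(hA.1.eigenvalues i) := by
  rw [msqrt_eq_conjStarAlgAut hA, trace_conjStarAlgAut, trace_diagonal, Complex.re_sum]
  simp

lemma re_trace_mul_self (hA : A.IsHermitian) :
    (A * A).trace.re = ∑ i, hA.eigenvalues i ^ 2 := by
  conv_lhs => rw [hA.spectral_theorem]
  rw [← map_mul, trace_conjStarAlgAut, diagonal_mul_diagonal, trace_diagonal, Complex.re_sum]
  simp [sq, ← Complex.ofReal_mul]

end MatrixSqrt

lemma Matrix.PosSemidef.re_apply_self_nonneg {n : Type*} {σ : Matrix n n ℂ} (hσ : σ.PosSemidef)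
    (i : n) : 0 ≤ (σ i i).re :=
  (Complex.nonneg_iff.mp hσ.diag_nonneg).1

section DiagonalTrace

variable {n : Type*} [Fintype n] [DecidableEq n] {σ : Matrix n n ℂ}

lemma re_trace_mul_diagonal (d : n → ℝ) :
    (σ * diagonal (fun i => (d i : ℂ))).trace.re = ∑ i, d i * (σ i i).re := by
  simp [trace, mul_comm]

lemma re_trace_diagonal_mul_mul_diagonal_mul (hσ : σ.IsHermitian) (d : n → ℝ) :
    (diagonal (fun i => (d i : ℂ)) * σ * diagonal (fun i => (d i : ℂ)) * σ).trace.re =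
      ∑ i, ∑ k, d i * d k * Complex.normSq (σ i k) := by
  simp only [trace, diag, Complex.re_sum]
  refine Finset.sum_congr rfl fun i _ => ?_
  rw [mul_apply, Complex.re_sum]
  refine Finset.sum_congr rfl fun k _ => ?_
  rw [mul_diagonal, diagonal_mul, ← hσ.apply k i, Complex.star_def, ← Complex.ofReal_re
    (d i * d k * _), Complex.ofReal_mul, Complex.ofReal_mul, ← Complex.mul_conj]
  congr 1
  ring

lemma sum_sq_le_re_trace_diagonal_mul_mul_diagonal_mul (hσ : σ.IsHermitian) {d : n → ℝ}
    (hd : 0 ≤ d) :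
    ∑ i, (d i * (σ i i).re) ^ 2 ≤
      (diagonal (fun i => (d i : ℂ)) * σ * diagonal (fun i => (d i : ℂ)) * σ).trace.re := by
  rw [re_trace_diagonal_mul_mul_diagonal_mul hσ]
  refine Finset.sum_le_sum fun i _ => ?_
  calc (d i * (σ i i).re) ^ 2 = d i * d i * Complex.normSq (σ i i) := by
        rw [Complex.normSq_apply, Complex.conj_eq_iff_im.mp (hσ.apply i i)]
        ring
    _ ≤ ∑ k, d i * d k * Complex.normSq (σ i k) :=
        Finset.single_le_sum (f := fun k => d i * d k * Complex.normSq (σ i k))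
          (fun k _ => mul_nonneg (mul_nonneg (hd i) (hd k)) (Complex.normSq_nonneg _))
          (Finset.mem_univ i)

end DiagonalTrace

lemma sq_sqrt_add_sqrt_add_sqrt {a b c : ℝ} (ha : 0 ≤ a) (hb : 0 ≤ b) (hc : 0 ≤ c)
    (habc : a * b * c = 0) :
    (√a + √b + √c) ^ 2 = a + b + c + 2 * √(a * b + a * c + b * c) := by
  rcases mul_eq_zero.mp habc with hab | rfl
  · rcases mul_eq_zero.mp hab with rfl | rfl
    · simp [Real.sqrt_mul hb, add_sq, Real.sq_sqrt hb, Real.sq_sqrt hc]; ring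
    · simp [Real.sqrt_mul ha, add_sq, Real.sq_sqrt ha, Real.sq_sqrt hc]; ring
  · simp [Real.sqrt_mul ha, add_sq, Real.sq_sqrt ha, Real.sq_sqrt hb]; ring

lemma sq_re_trace_msqrt_of_det_eq_zero {M : Matrix (Fin 3) (Fin 3) ℂ} (hM : M.PosSemidef)
    (hdet : M.det = 0) :
    (msqrt M).trace.re ^ 2 = M.trace.re + 2 * √((M.trace.re ^ 2 - (M * M).trace.re) / 2) := by
  have hl : hM.1.eigenvalues 0 * hM.1.eigenvalues 1 * hM.1.eigenvalues 2 = 0 := by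
    have := hM.1.det_eq_prod_eigenvalues
    rw [hdet, Fin.prod_univ_three] at this
    simpa using this.symm
  have htr : M.trace.re = ∑ i, hM.1.eigenvalues i := by
    simp [hM.1.trace_eq_sum_eigenvalues]
  rw [re_trace_msqrt hM, re_trace_mul_self hM.1, htr]
  simp only [Fin.sum_univ_three]
  rw [sq_sqrt_add_sqrt_add_sqrt (hM.eigenvalues_nonneg 0) (hM.eigenvalues_nonneg 1)
    (hM.eigenvalues_nonneg 2) hl]
  congr 3
  ring

lemma fid_diagonal_le {σ : Matrix (Fin 3) (Fin 3) ℂ} (hσ : σ.PosSemidef) {d : Fin 3 → ℝ}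
    (hd : 0 ≤ d) (hd₀ : ∃ i, d i = 0) :
    fid σ (diagonal fun i => (d i : ℂ)) ≤ (∑ i, √(d i * (σ i i).re)) ^ 2 := by
  have hRR : msqrt σ * msqrt σ = σ := msqrt_mul_self hσ
  have hR : (msqrt σ)ᴴ = msqrt σ := (msqrt_posSemidef hσ).1
  rw [fid]
  generalize msqrt σ = R at hRR hR
  set ρ : Matrix (Fin 3) (Fin 3) ℂ := diagonal fun i => (d i : ℂ)
  obtain ⟨i₀, hi₀⟩ := hd₀
  have hM : (R * ρ * R).PosSemidef := by
    have hρ : ρ.PosSemidef := PosSemidef.diagonal fun i => by simpa using hd i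
    simpa [hR] using hρ.conjTranspose_mul_mul_same R
  have hdet : (R * ρ * R).det = 0 := by
    simp [ρ, det_mul, det_diagonal, Finset.prod_eq_zero (Finset.mem_univ i₀), hi₀]
  have htr : (R * ρ * R).trace = (σ * ρ).trace := by
    rw [trace_mul_cycle, hRR]
  have htr_sq : (R * ρ * R * (R * ρ * R)).trace = (ρ * σ * ρ * σ).trace := by
    rw [show R * ρ * R * (R * ρ * R) = R * (ρ * σ * ρ) * R by
        simp only [← hRR, Matrix.mul_assoc], trace_mul_cycle, hRR, trace_mul_comm]
  set a := fun i => d i * (σ i i).re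
  have ha i : 0 ≤ a i := mul_nonneg (hd i) (hσ.re_apply_self_nonneg i)
  have hsq := htr_sq ▸ sum_sq_le_re_trace_diagonal_mul_mul_diagonal_mul hσ.1 hd
  have ha₀ : a 0 * a 1 * a 2 = 0 := by
    rw [← Fin.prod_univ_three]
    exact Finset.prod_eq_zero (Finset.mem_univ i₀) (by simp [a, hi₀])
  rw [sq_re_trace_msqrt_of_det_eq_zero hM hdet]
  calc _ ≤ ∑ i, a i + 2 * √(a 0 * a 1 + a 0 * a 2 + a 1 * a 2) := by
        rw [htr, re_trace_mul_diagonal]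
        simp only [Fin.sum_univ_three] at hsq ⊢
        gcongr
        linarith
    _ = (∑ i, √(a i)) ^ 2 := by
        simp only [Fin.sum_univ_three]
        rw [sq_sqrt_add_sqrt_add_sqrt (ha 0) (ha 1) (ha 2) ha₀]

lemma sq_add_sq_le_one_add_sq {c s p q r : ℝ} (hcs : c ^ 2 + s ^ 2 = 1)
    (hpqr : p ^ 2 + q ^ 2 + r ^ 2 = 1) :
    (c * p + s * q) ^ 2 + (c * p + s * r) ^ 2 ≤ 1 + c ^ 2 := by
  nlinarith [sq_nonneg (c * (q + r) - s * p), sq_nonneg (c * (q - r))]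

theorem alice_cheating_bound_general (α : ℝ)
    (ρ₀ ρ₁ : Matrix (Fin 3) (Fin 3) ℂ)
    (h₀ : ρ₀ = (Real.cos (α / 2) : ℂ) ^ 2 • Matrix.single 0 0 1 +
               (Real.sin (α / 2) : ℂ) ^ 2 • Matrix.single 1 1 1)
    (h₁ : ρ₁ = (Real.cos (α / 2) : ℂ) ^ 2 • Matrix.single 0 0 1 +
               (Real.sin (α / 2) : ℂ) ^ 2 • Matrix.single 2 2 1) :
    ∀ σ : Matrix (Fin 3) (Fin 3) ℂ, σ.PosSemidef → σ.trace = 1 →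
      (1 / 2) * (fid σ ρ₀ + fid σ ρ₁) ≤ (1 / 2) * (1 + Real.cos (α / 2) ^ 2) := by
  intro σ hσ htr
  set c := Real.cos (α / 2)
  set s := Real.sin (α / 2)
  have hρ₀ : ρ₀ = diagonal fun i => ((![c ^ 2, s ^ 2, 0] i : ℝ) : ℂ) := by
    ext i j; fin_cases i <;> fin_cases j <;> simp [h₀]
  have hρ₁ : ρ₁ = diagonal fun i => ((![c ^ 2, 0, s ^ 2] i : ℝ) : ℂ) := by
    ext i j; fin_cases i <;> fin_cases j <;> simp [h₁]
  have hx i : 0 ≤ (σ i i).re := hσ.re_apply_self_nonneg i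
  have hsum : √(σ 0 0).re ^ 2 + √(σ 1 1).re ^ 2 + √(σ 2 2).re ^ 2 = 1 := by
    simpa [Real.sq_sqrt (hx _), trace, Fin.sum_univ_three] using congrArg Complex.re htr
  have hnonneg₀ : 0 ≤ ![c ^ 2, s ^ 2, 0] := by
    intro i; fin_cases i <;> simp [sq_nonneg]
  have hnonneg₁ : 0 ≤ ![c ^ 2, 0, s ^ 2] := by
    intro i; fin_cases i <;> simp [sq_nonneg]
  have hF₀ := hρ₀ ▸ fid_diagonal_le hσ hnonneg₀ ⟨2, rfl⟩
  have hF₁ := hρ₁ ▸ fid_diagonal_le hσ hnonneg₁ ⟨1, rfl⟩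
  simp only [Fin.sum_univ_three, Real.sqrt_mul' _ (hx _), Fin.isValue, cons_val_zero,
    cons_val_one, cons_val, Real.sqrt_sq_eq_abs, Real.sqrt_zero, zero_mul, add_zero] at hF₀ hF₁
  have hcs : |c| ^ 2 + |s| ^ 2 = 1 := by
    rw [sq_abs, sq_abs]
    exact Real.cos_sq_add_sin_sq _
  calc (1 / 2) * (fid σ ρ₀ + fid σ ρ₁)
      ≤ (1 / 2) * ((|c| * √(σ 0 0).re + |s| * √(σ 1 1).re) ^ 2 +
          (|c| * √(σ 0 0).re + |s| * √(σ 2 2).re) ^ 2) := by gcongr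
    _ ≤ (1 / 2) * (1 + |c| ^ 2) := by
        linarith [sq_add_sq_le_one_add_sq hcs hsum]
    _ = (1 / 2) * (1 + c ^ 2) := by rw [sq_abs]

/-- Alice's cheating bound. For any density matrix `σ` on `ℂ³`,
`(1/2)(F(σ,ρ₀) + F(σ,ρ₁)) ≤ (1/2)(1 + cos²(α/2))` where `ρ_a` are the reduced honest states. -/
theorem alice_cheating_bound (α : ℝ) (hα : α ∈ Set.Icc 0 Real.pi)
    (ρ₀ ρ₁ : Matrix (Fin 3) (Fin 3) ℂ)
    (h₀ : ρ₀ = (Real.cos (α / 2) : ℂ) ^ 2 • Matrix.single 0 0 1 +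
               (Real.sin (α / 2) : ℂ) ^ 2 • Matrix.single 1 1 1)
    (h₁ : ρ₁ = (Real.cos (α / 2) : ℂ) ^ 2 • Matrix.single 0 0 1 +
               (Real.sin (α / 2) : ℂ) ^ 2 • Matrix.single 2 2 1) :
    ∀ σ : Matrix (Fin 3) (Fin 3) ℂ, σ.PosSemidef → σ.trace = 1 →
      (1 / 2) * (fid σ ρ₀ + fid σ ρ₁) ≤ (1 / 2) * (1 + Real.cos (α / 2) ^ 2) :=
  alice_cheating_bound_general α ρ₀ ρ₁ h₀ h₁
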